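/- If $\gamma>1$ and the upstream state $(V_0,C_0)$ satisfies the supersonic condition $C_0^2<(1+V_0)^2$ with $1+V_0>0$, then the downstream state defined by $1+V_1=\frac{\gamma-1}{\gamma+1}(1+V_0)+\frac{2C_0^2}{(\gamma+1)(1+V_0)}$ and $C_1^2=C_0^2+\frac{\gamma-1}{2}[(1+V_0)^2-(1+V_1)^2]$ satisfies $C_1^2>(1+V_1)^2$. -/

import Mathlib

/-!
Clearing denominators in the Rankine–Hugoniot relations factors the downstream gap as
`C₁² - (1 + V₁)² = ((1 + V₀)² - C₀²) ((γ - 1)(1 + V₀)² + 2 C₀²) / ((γ + 1)(1 + V₀)²)`,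
and every factor on the right is positive when `γ > 1` and the upstream state is supersonic.
-/

theorem rankineHugoniot_downstream_gap_eq {γ u c w : ℝ} (hγ : γ + 1 ≠ 0) (hu : u ≠ 0)
    (hw : w = (γ - 1) / (γ + 1) * u + 2 * c / ((γ + 1) * u)) :
    c + (γ - 1) / 2 * (u ^ 2 - w ^ 2) - w ^ 2
      = (u ^ 2 - c) * ((γ - 1) * u ^ 2 + 2 * c) / ((γ + 1) * u ^ 2) := by
  subst hw
  field_simp
  ring

/-- If the upstream state is supersonic, the downstream state is subsonic
(the admissibility of similarity shocks). -/
theorem stmt1 (γ V0 C0 V1 C1sq : ℝ) (hγ : 1 < γ) (hV0 : 0 < 1 + V0)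
    (hsup : C0 ^ 2 < (1 + V0) ^ 2)
    (h1 : 1 + V1 = (γ - 1) / (γ + 1) * (1 + V0) + 2 * C0 ^ 2 / ((γ + 1) * (1 + V0)))
    (h2 : C1sq = C0 ^ 2 + (γ - 1) / 2 * ((1 + V0) ^ 2 - (1 + V1) ^ 2)) :
    (1 + V1) ^ 2 < C1sq := by
  rw [← sub_pos, h2, rankineHugoniot_downstream_gap_eq (by linarith) hV0.ne' h1]
  have hfactor : 0 < (γ - 1) * (1 + V0) ^ 2 + 2 * C0 ^ 2 :=
    add_pos_of_pos_of_nonneg (mul_pos (sub_pos.2 hγ) (pow_pos hV0 2)) (by positivity)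
  exact div_pos (mul_pos (sub_pos.2 hsup) hfactor) (mul_pos (by linarith) (pow_pos hV0 2))
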